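/- A signed graph G_σ is balanced if and only if it can be switched to have all edges positive, i.e., there exists a vertex subset W such that negating the signs of all edges with exactly one endpoint in W makes every edge positive. -/

import Mathlib

namespace SignedGraph

variable {V : Type*}

/-- The sign of a walk in a signed graph: the product of its edge signs. -/
def walkSign {G : SimpleGraph V} (σ : V → V → ℤˣ) : {u v : V} → G.Walk u v → ℤˣ
  | _, _, SimpleGraph.Walk.nil => 1
  | u, _, SimpleGraph.Walk.cons (v := w) _ p => σ u w * walkSign σ p

/-- A signed graph is balanced if every cycle has positive sign. -/
def Balanced (G : SimpleGraph V) (σ : V → V → ℤˣ) : Prop :=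
  ∀ ⦃u : V⦄ (c : G.Walk u u), c.IsCycle → walkSign σ c = 1

/-- Sign connection: every two distinct vertices are joined both by a
positive and by a negative walk. -/
def SignConnected (G : SimpleGraph V) (σ : V → V → ℤˣ) : Prop :=
  ∀ x y : V, x = y ∨
    ((∃ p : G.Walk x y, walkSign σ p = 1) ∧ (∃ p : G.Walk x y, walkSign σ p = -1))

open Classical in
/-- Switching by a vertex subset `W`: negate the signs of edges with exactly
one endpoint in `W`. -/
noncomputable def switchSign (W : Set V) (σ : V → V → ℤˣ) (u v : V) : ℤˣ :=
  if Xor' (u ∈ W) (v ∈ W) then -σ u v else σ u v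

end SignedGraph

/-!
In a balanced signed graph the sign of a walk is unchanged when it is shortcut to a path: each
shortcut removes a closed subwalk made of a path closed up by one edge, which is a cycle or an
edge traversed twice. So closed walks are positive, the sign of a walk depends only on its ends,
and fixing a root in each component gives a potential `s` with `σ u v = s u * s v` on edges;
switching at `{s = -1}` makes every edge positive. Conversely, switching by a potential `s`
multiplies the sign of a closed walk at `u` by `s u * s u = 1`.
-/

open SimpleGraph

namespace SignedGraph

variable {V : Type*} {G : SimpleGraph V} {σ : V → V → ℤˣ}

@[simp]
lemma walkSign_nil {u : V} : walkSign σ (Walk.nil : G.Walk u u) = 1 := rfl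

@[simp]
lemma walkSign_cons {u v w : V} (h : G.Adj u v) (p : G.Walk v w) :
    walkSign σ (Walk.cons h p) = σ u v * walkSign σ p := rfl

lemma walkSign_append {u v w : V} (p : G.Walk u v) (q : G.Walk v w) :
    walkSign σ (p.append q) = walkSign σ p * walkSign σ q := by
  induction p with
  | nil => simp
  | cons h p ih => simp [ih, mul_assoc]

lemma walkSign_concat {u v w : V} (p : G.Walk u v) (h : G.Adj v w) :
    walkSign σ (p.concat h) = walkSign σ p * σ v w := by
  simp [Walk.concat, walkSign_append]

lemma walkSign_reverse (hσ : ∀ u v, σ u v = σ v u) {u v : V} (p : G.Walk u v) :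
    walkSign σ p.reverse = walkSign σ p := by
  induction p with
  | nil => rfl
  | cons h p ih => simp [walkSign_append, ih, hσ, mul_comm]

lemma walkSign_eq_one_of_forall_adj (hσ : ∀ u v, G.Adj u v → σ u v = 1) {u v : V}
    (p : G.Walk u v) : walkSign σ p = 1 := by
  induction p with
  | nil => rfl
  | cons h p ih => simp [ih, hσ _ _ h]

lemma walkSign_mul_potential (s : V → ℤˣ) {u v : V} (p : G.Walk u v) :
    walkSign (fun a b => s a * σ a b * s b) p = s u * walkSign σ p * s v := by
  induction p with
  | nil => simp [Int.units_mul_self]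
  | @cons a b c h p ih =>
    rw [walkSign_cons, walkSign_cons, ih]
    calc s a * σ a b * s b * (s b * walkSign σ p * s c)
        = s a * σ a b * (s b * s b) * walkSign σ p * s c := by simp only [mul_assoc]
      _ = s a * (σ a b * walkSign σ p) * s c := by
        rw [Int.units_mul_self]
        simp only [mul_assoc, mul_one]

open Classical in
noncomputable def switchingPotential (W : Set V) (v : V) : ℤˣ := if v ∈ W then -1 else 1

lemma switchSign_eq_mul (W : Set V) (u v : V) :
    switchSign W σ u v = switchingPotential W u * σ u v * switchingPotential W v := by
  unfold switchSign
  split_ifs with hxor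
  · rcases hxor with ⟨hu, hv⟩ | ⟨hv, hu⟩ <;> simp [switchingPotential, hu, hv]
  · by_cases hu : u ∈ W <;> by_cases hv : v ∈ W <;> simp [switchingPotential, hu, hv] <;>
      exact hxor (by tauto)

lemma walkSign_switchSign (W : Set V) {u v : V} (p : G.Walk u v) :
    walkSign (switchSign W σ) p =
      switchingPotential W u * walkSign σ p * switchingPotential W v := by
  rw [funext₂ (switchSign_eq_mul W (σ := σ)), walkSign_mul_potential]

lemma switchingPotential_setOf_eq_neg_one (s : V → ℤˣ) :
    switchingPotential {v | s v = -1} = s := by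
  funext v
  rcases Int.units_eq_one_or (s v) with h | h <;> simp [switchingPotential, h]

/-- A path closed up by one edge is either a cycle or that edge traversed back and forth. -/
lemma Balanced.walkSign_cons_of_isPath (hb : Balanced G σ) (hσ : ∀ u v, σ u v = σ v u)
    {u v : V} (h : G.Adj u v) {p : G.Walk v u} (hp : p.IsPath) :
    walkSign σ (Walk.cons h p) = 1 := by
  by_cases he : s(u, v) ∈ p.edges
  · rw [hp.eq_adj_toWalk_of_mem_edges (Sym2.eq_swap ▸ he)]
    simp [hσ v u, Int.units_mul_self]
  · exact hb _ ((Walk.cons_isCycle_iff p h).2 ⟨hp, he⟩)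

lemma Balanced.walkSign_bypass [DecidableEq V] (hb : Balanced G σ) (hσ : ∀ u v, σ u v = σ v u)
    {u v : V} (p : G.Walk u v) : walkSign σ p.bypass = walkSign σ p := by
  induction p with
  | nil => rfl
  | @cons a b c h p ih =>
    rw [Walk.bypass]
    split_ifs with ha
    · have hcycle := hb.walkSign_cons_of_isPath hσ h (p.bypass_isPath.takeUntil ha)
      have hsplit := congrArg (walkSign σ) (p.bypass.take_spec ha)
      rw [walkSign_append] at hsplit
      rw [walkSign_cons, ← ih, ← hsplit, ← mul_assoc, ← walkSign_cons h, hcycle, one_mul]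
    · rw [walkSign_cons, walkSign_cons, ih]

lemma Balanced.walkSign_eq_one (hb : Balanced G σ) (hσ : ∀ u v, σ u v = σ v u) {u : V}
    (c : G.Walk u u) : walkSign σ c = 1 := by
  classical
  rw [← hb.walkSign_bypass hσ, Walk.eq_nil_iff_nil.2 (Walk.isPath_iff_nil.1 c.bypass_isPath),
    walkSign_nil]

lemma Balanced.walkSign_eq (hb : Balanced G σ) (hσ : ∀ u v, σ u v = σ v u) {u v : V}
    (p q : G.Walk u v) : walkSign σ p = walkSign σ q := by
  have hpq := hb.walkSign_eq_one hσ (p.append q.reverse)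
  rwa [walkSign_append, walkSign_reverse hσ, mul_eq_one_iff_eq_inv, Int.units_inv_eq_self] at hpq

/-- The potential of `v` is the sign of any walk to `v` from a fixed vertex of its component. -/
lemma Balanced.exists_potential (hb : Balanced G σ) (hσ : ∀ u v, σ u v = σ v u) :
    ∃ s : V → ℤˣ, ∀ u v, G.Adj u v → σ u v = s u * s v := by
  choose root hroot using fun c : G.ConnectedComponent => c.exists_rep
  have hreach (v : V) : G.Reachable (root (G.connectedComponentMk v)) v :=
    ConnectedComponent.exact (hroot _)
  refine ⟨fun v => walkSign σ (hreach v).some, fun u v huv => ?_⟩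
  beta_reduce
  have hroot_eq : root (G.connectedComponentMk u) = root (G.connectedComponentMk v) := by
    rw [ConnectedComponent.connectedComponentMk_eq_of_adj huv]
  suffices ∀ {a b : V} (p : G.Walk a u) (q : G.Walk b v), a = b →
      walkSign σ q = walkSign σ p * σ u v by
    rw [this _ _ hroot_eq, ← mul_assoc, Int.units_mul_self, one_mul]
  rintro a _ p q rfl
  rw [hb.walkSign_eq hσ q (p.concat huv), walkSign_concat]

end SignedGraph

open SignedGraph

theorem stmt_1_general {V : Type*} (G : SimpleGraph V) (σ : V → V → ℤˣ)
    (hσ : ∀ u v : V, σ u v = σ v u) :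
    Balanced G σ ↔
      ∃ W : Set V, ∀ u v : V, G.Adj u v → switchSign W σ u v = 1 := by
  constructor
  · intro hb
    obtain ⟨s, hs⟩ := hb.exists_potential hσ
    refine ⟨{w | s w = -1}, fun u v huv => ?_⟩
    rw [switchSign_eq_mul, switchingPotential_setOf_eq_neg_one, hs u v huv, ← mul_assoc,
      Int.units_mul_self, one_mul, Int.units_mul_self]
  · rintro ⟨W, hW⟩ u c -
    have hswitched := walkSign_eq_one_of_forall_adj hW c
    rwa [walkSign_switchSign, mul_comm, ← mul_assoc, Int.units_mul_self, one_mul] at hswitched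

/-- A signed graph is balanced iff it can be switched to be all positive. -/
theorem stmt_1 {V : Type*} [Fintype V] (G : SimpleGraph V) (σ : V → V → ℤˣ)
    (hσ : ∀ u v : V, σ u v = σ v u) :
    Balanced G σ ↔
      ∃ W : Set V, ∀ u v : V, G.Adj u v → switchSign W σ u v = 1 :=
  stmt_1_general G σ hσ
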